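/- arXiv:1911.10237 — 2 statements merged into one kernel-verified Lean document; each statement's English description precedes it below -/
import Mathlib

section
/- Let Z be a standard normal random variable and define T = Z² if Z > 0 and T = 0 if Z ≤ 0 (the likelihood ratio statistic for testing μ = 0 vs μ > 0 at the boundary). Then for every c > 0, P(T > c) = (1/2)·P(χ²₁ > c); i.e., T is distributed as the mixture (1/2)δ₀ + (1/2)χ²₁. -/
/-!
On the event `T > c` with `c > 0` we must have `Z > 0`, so `{T > c} = {Z² > c} ∩ {Z > 0}`.
The standard normal law is invariant under `x ↦ -x`, and the symmetric set `{x² > c}`, which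
misses `0`, splits into its positive and negative halves, which `x ↦ -x` exchanges; each half
therefore carries exactly half of its mass.
-/

open MeasureTheory ProbabilityTheory Set

instance ProbabilityTheory.gaussianReal_zero_isNegInvariant (v : NNReal) :
    (gaussianReal 0 v).IsNegInvariant :=
  ⟨by simpa [Measure.neg_def, neg_zero] using gaussianReal_map_neg (μ := 0) (v := v)⟩

theorem MeasureTheory.Measure.measure_inter_Ioi_zero_eq_half {ν : Measure ℝ} [ν.IsNegInvariant]
    {s : Set ℝ} (hs : MeasurableSet s) (hneg : -s = s) (hzero : (0 : ℝ) ∉ s) :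
    ν (s ∩ Ioi 0) = ν s / 2 := by
  have hsplit : s = (s ∩ Ioi 0) ∪ (s ∩ Iio 0) := by
    rw [← inter_union_distrib_left, union_comm, Iio_union_Ioi, ← sdiff_eq,
      sdiff_singleton_eq_self hzero]
  have hreflect : -(s ∩ Ioi 0) = s ∩ Iio 0 := by
    rw [inter_neg, hneg, neg_Ioi, neg_zero]
  have hdisj : Disjoint (s ∩ Ioi 0) (s ∩ Iio 0) :=
    Ioi_disjoint_Iio_same.mono inter_subset_right inter_subset_right
  have htwice : ν s = 2 * ν (s ∩ Ioi 0) := by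
    conv_lhs => rw [hsplit]
    rw [measure_union hdisj (hs.inter measurableSet_Iio), ← hreflect, Measure.measure_neg, two_mul]
  rw [htwice, mul_comm, ENNReal.mul_div_cancel_right two_ne_zero ENNReal.ofNat_ne_top]

theorem chernoff_half_chisq_general {Ω : Type*} [MeasurableSpace Ω] (μ : Measure Ω)
    (Z : Ω → ℝ) (hZ : Measurable Z)
    (hlaw : μ.map Z = gaussianReal 0 1)
    (T : Ω → ℝ) (hT : ∀ ω, T ω = if 0 < Z ω then (Z ω) ^ 2 else 0) :
    ∀ c > (0 : ℝ), μ {ω | c < T ω} = (1 / 2) * μ {ω | c < (Z ω) ^ 2} := by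
  intro c hc
  set S : Set ℝ := {x | c < x ^ 2}
  have hS : MeasurableSet S := measurableSet_lt measurable_const (measurable_id.pow_const 2)
  have hT_event : {ω | c < T ω} = Z ⁻¹' (S ∩ Ioi 0) := by
    ext ω
    by_cases hpos : 0 < Z ω <;> simp [S, hT, hpos, hc.le.not_gt]
  have hS_neg : -S = S := by ext x; simp [S]
  have hS_zero : (0 : ℝ) ∉ S := by simp [S, hc.le.not_gt]
  calc μ {ω | c < T ω} = gaussianReal 0 1 (S ∩ Ioi 0) := by
        rw [hT_event, ← Measure.map_apply hZ (hS.inter measurableSet_Ioi), hlaw]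
    _ = (1 / 2) * gaussianReal 0 1 S := by
        rw [Measure.measure_inter_Ioi_zero_eq_half hS hS_neg hS_zero, ENNReal.div_eq_inv_mul,
          one_div]
    _ = (1 / 2) * μ {ω | c < (Z ω) ^ 2} := by rw [← hlaw, Measure.map_apply hZ hS]; rfl

/-- Chernoff's boundary result: if `Z` is standard normal and `T = Z²·1{Z>0}`
(the LRT statistic for `μ = 0` vs `μ > 0` at the boundary), then for every `c > 0`,
`P(T > c) = (1/2)·P(χ²₁ > c)`, where `χ²₁` is represented as `Z²`. -/
theorem chernoff_half_chisq {Ω : Type*} [MeasurableSpace Ω] (μ : Measure Ω)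
    [IsProbabilityMeasure μ] (Z : Ω → ℝ) (hZ : Measurable Z)
    (hlaw : μ.map Z = gaussianReal 0 1)
    (T : Ω → ℝ) (hT : ∀ ω, T ω = if 0 < Z ω then (Z ω) ^ 2 else 0) :
    ∀ c > (0 : ℝ), μ {ω | c < T ω} = (1 / 2) * μ {ω | c < (Z ω) ^ 2} :=
  chernoff_half_chisq_general μ Z hZ hlaw T hT
end

section
/- Identifiability when μ > 0: in the same mixture model p_{μ,γ}(x) = (β/(μ+β))B(x) + (μ/(μ+β))φ(x−γ) with B a polynomial density on an interval, if (μ,γ) ≠ (μ',γ') with μ, μ' > 0 then p_{μ,γ} ≠ p_{μ',γ'} as functions. -/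
/-!
Beyond the support `[s, t]` of `B` only the Gaussian term survives, so equal mixtures give
`a · exp (-(x - γ)² / 2) = a' · exp (-(x - γ')² / 2)` for all `x > t`, with `a = μ / (μ + β)`.
Completing the square turns both sides into `c · exp (γ x)` times the common factor
`exp (-x² / 2)`, and an exponential `c · exp (γ x)` with `c ≠ 0` determines `c` and `γ` from its
values on any ray. Finally `μ ↦ μ / (μ + β)` is injective for `β ≠ 0`.
-/

open Real Filter

lemma eq_and_eq_of_mul_exp_eventuallyEq {c c' γ γ' : ℝ} (hc : c ≠ 0)
    (h : ∀ᶠ x in atTop, c * exp (γ * x) = c' * exp (γ' * x)) : c = c' ∧ γ = γ' := by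
  obtain ⟨N, hN⟩ := eventually_atTop.mp h
  have h₀ := hN N le_rfl
  have h₁ := hN (N + 1) (by linarith)
  have hcN : c * exp (γ * N) ≠ 0 := mul_ne_zero hc (exp_ne_zero _)
  rw [mul_add, mul_add, mul_one, mul_one, exp_add, exp_add, ← mul_assoc, ← mul_assoc, h₀] at h₁
  have hγ : γ = γ' := exp_injective (mul_left_cancel₀ (h₀ ▸ hcN) h₁)
  subst hγ
  exact ⟨mul_right_cancel₀ (exp_ne_zero _) h₀, rfl⟩

lemma exp_neg_sub_sq_div_two (x γ : ℝ) :
    exp (-(x - γ) ^ 2 / 2) = exp (-γ ^ 2 / 2) * exp (γ * x) * exp (-x ^ 2 / 2) := by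
  rw [← exp_add, ← exp_add]
  ring_nf

lemma eq_and_eq_of_mul_gaussian_eventuallyEq {a a' γ γ' : ℝ} (ha : a ≠ 0)
    (h : ∀ᶠ x in atTop, a * exp (-(x - γ) ^ 2 / 2) = a' * exp (-(x - γ') ^ 2 / 2)) :
    a = a' ∧ γ = γ' := by
  have hexp : ∀ᶠ x in atTop,
      a * exp (-γ ^ 2 / 2) * exp (γ * x) = a' * exp (-γ' ^ 2 / 2) * exp (γ' * x) := by
    filter_upwards [h] with x hx
    simp only [exp_neg_sub_sq_div_two, ← mul_assoc] at hx
    exact mul_right_cancel₀ (exp_ne_zero _) hx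
  obtain ⟨hc, rfl⟩ := eq_and_eq_of_mul_exp_eventuallyEq (mul_ne_zero ha (exp_ne_zero _)) hexp
  exact ⟨mul_right_cancel₀ (exp_ne_zero _) hc, rfl⟩

lemma eq_of_div_add_eq_div_add {β μ μ' : ℝ} (hβ : β ≠ 0) (hμ : μ + β ≠ 0) (hμ' : μ' + β ≠ 0)
    (h : μ / (μ + β) = μ' / (μ' + β)) : μ = μ' := by
  rw [div_eq_div_iff hμ hμ'] at h
  exact mul_right_cancel₀ hβ (by linear_combination h)

theorem identifiable_pos_signal_general (β s t : ℝ) (hβ : 0 < β) (P : Polynomial ℝ)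
    (B : ℝ → ℝ) (hB : ∀ x, B x = if x ∈ Set.Icc s t then P.eval x else 0)
    (φ : ℝ → ℝ) (hφ : ∀ x, φ x = (Real.sqrt (2 * Real.pi))⁻¹ * Real.exp (-x ^ 2 / 2))
    (p : ℝ → ℝ → ℝ → ℝ)
    (hp : ∀ μ γ x, p μ γ x = (β / (μ + β)) * B x + (μ / (μ + β)) * φ (x - γ))
    (μ μ' γ γ' : ℝ) (hμ : 0 < μ) (hne : (μ, γ) ≠ (μ', γ')) :
    p μ γ ≠ p μ' γ' := by
  intro h
  have hμβ : μ + β ≠ 0 := by positivity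
  have ha : μ / (μ + β) ≠ 0 := div_ne_zero hμ.ne' hμβ
  have hnorm : (sqrt (2 * π))⁻¹ ≠ 0 := by positivity
  have htail : ∀ᶠ x in atTop, μ / (μ + β) * exp (-(x - γ) ^ 2 / 2) =
      μ' / (μ' + β) * exp (-(x - γ') ^ 2 / 2) := by
    filter_upwards [eventually_gt_atTop t] with x hx
    have hBx : B x = 0 := by
      rw [hB, if_neg fun hmem => hx.not_ge hmem.2]
    have hpx := congrFun h x
    simp only [hp, hBx, hφ, mul_zero, zero_add, mul_left_comm _ (sqrt (2 * π))⁻¹] at hpx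
    exact mul_left_cancel₀ hnorm hpx
  obtain ⟨haa', rfl⟩ := eq_and_eq_of_mul_gaussian_eventuallyEq ha htail
  have hμ'β : μ' + β ≠ 0 := (div_ne_zero_iff.mp (haa' ▸ ha)).2
  exact hne (by rw [eq_of_div_add_eq_div_add hβ.ne' hμβ hμ'β haa'])

/-- Identifiability when `μ > 0`: in the mixture model
`p_{μ,γ} = (β/(μ+β))·B + (μ/(μ+β))·φ(·−γ)` with `φ` the standard normal density
and `B` a polynomial density supported on an interval `[s,t]`, distinct
parameters `(μ,γ) ≠ (μ',γ')` with `μ, μ' > 0` give distinct densities. -/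
theorem identifiable_pos_signal (β s t : ℝ) (hβ : 0 < β) (P : Polynomial ℝ)
    (B : ℝ → ℝ) (hB : ∀ x, B x = if x ∈ Set.Icc s t then P.eval x else 0)
    (hB0 : ∀ x, 0 ≤ B x) (hB1 : ∫ x, B x = 1)
    (φ : ℝ → ℝ) (hφ : ∀ x, φ x = (Real.sqrt (2 * Real.pi))⁻¹ * Real.exp (-x ^ 2 / 2))
    (p : ℝ → ℝ → ℝ → ℝ)
    (hp : ∀ μ γ x, p μ γ x = (β / (μ + β)) * B x + (μ / (μ + β)) * φ (x - γ))
    (μ μ' γ γ' : ℝ) (hμ : 0 < μ) (hμ' : 0 < μ') (hne : (μ, γ) ≠ (μ', γ')) :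
    p μ γ ≠ p μ' γ' :=
  identifiable_pos_signal_general β s t hβ P B hB φ hφ p hp μ μ' γ γ' hμ hne
end
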